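/- arXiv:2303.15746 — 2 statements merged into one kernel-verified Lean document; each statement's English description precedes it below -/
import Mathlib

section
/- For a query X = (x_1,...,x_q) with noise-free responses, define x⁺(X,i) ∈ argmax_x E[f(x) | r(X) = i] and X⁺ = (x⁺(X,1),...,x⁺(X,q)). Then V(X) ≤ qEUBO(X⁺), i.e., E[max_x E[f(x)|r(X)]] ≤ E[max_i f(x⁺(X, r(X)))] ≤ E[max_i f(x⁺(X,i))]. -/
/-!
Both inequalities hold fibrewise over the values `i` of `r`: on `{r = i}` the posterior mean
is maximised by `xp i`, and `f (xp i) ≤ maxⱼ f (xp j)` pointwise. For the second one, the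
weighted conditional means `μ{r = i} · E[g | r = i] = ∫_{r = i} g` sum to `∫ g` because the
fibres of `r` partition `Ω`.
-/

open MeasureTheory ProbabilityTheory Finset

theorem MeasureTheory.Integrable.finset_sup' {Ω ι β : Type*} [MeasurableSpace Ω]
    [NormedAddCommGroup β] [Lattice β] [HasSolidNorm β] [IsOrderedAddMonoid β] {μ : Measure Ω}
    {s : Finset ι} (hs : s.Nonempty) {g : ι → Ω → β} (hg : ∀ i ∈ s, Integrable (g i) μ) :
    Integrable (fun ω => s.sup' hs fun i => g i ω) μ := by
  simp_rw [← Finset.sup'_apply]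
  exact Finset.sup'_induction (p := (Integrable · μ)) hs g (fun _ h₁ _ h₂ => h₁.sup h₂) hg

theorem ProbabilityTheory.measureReal_mul_integral_cond {Ω : Type*} [MeasurableSpace Ω]
    (μ : Measure Ω) [IsFiniteMeasure μ] (s : Set Ω) (g : Ω → ℝ) :
    μ.real s * ∫ ω, g ω ∂μ[|s] = ∫ ω in s, g ω ∂μ := by
  rw [cond, integral_smul_measure, smul_eq_mul, ← mul_assoc, ENNReal.toReal_inv]
  rcases eq_or_ne (μ s) 0 with hs | hs
  · simp [Measure.restrict_eq_zero.mpr hs]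
  · rw [measureReal_def, mul_inv_cancel₀ (ENNReal.toReal_ne_zero.mpr ⟨hs, measure_ne_top μ s⟩),
      one_mul]

theorem MeasureTheory.sum_setIntegral_fiber {Ω α E : Type*} [MeasurableSpace Ω] [Fintype α]
    [MeasurableSpace α] [MeasurableSingletonClass α] [NormedAddCommGroup E] [NormedSpace ℝ E]
    {μ : Measure Ω} {X : Ω → α} (hX : Measurable X) {g : Ω → E} (hg : Integrable g μ) :
    ∑ a, ∫ ω in X ⁻¹' {a}, g ω ∂μ = ∫ ω, g ω ∂μ := by
  rw [← integral_iUnion_fintype (fun a => hX (measurableSet_singleton a))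
    (pairwise_disjoint_fiber X) (fun _ => hg.integrableOn), ← Set.preimage_iUnion,
    Set.iUnion_of_singleton, Set.preimage_univ, setIntegral_univ]

theorem stmt5_general
    {Ω : Type*} [MeasurableSpace Ω] (μ : Measure Ω) [IsProbabilityMeasure μ]
    {X : Type*} [Fintype X] [Nonempty X]
    (q : ℕ) (hq : 1 ≤ q)
    (f : X → Ω → ℝ) (hint : ∀ y, Integrable (f y) μ)
    (r : Ω → Fin q) (hr : Measurable r)
    (xp : Fin q → X)
    (hxp : ∀ i (y : X),
      ∫ ω, f y ω ∂(μ[|r ⁻¹' {i}]) ≤ ∫ ω, f (xp i) ω ∂(μ[|r ⁻¹' {i}])) :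
    (∑ i, (μ (r ⁻¹' {i})).toReal
        * (univ.sup' univ_nonempty fun y => ∫ ω, f y ω ∂(μ[|r ⁻¹' {i}])))
      ≤ ∑ i, (μ (r ⁻¹' {i})).toReal * ∫ ω, f (xp i) ω ∂(μ[|r ⁻¹' {i}])
    ∧ (∑ i, (μ (r ⁻¹' {i})).toReal * ∫ ω, f (xp i) ω ∂(μ[|r ⁻¹' {i}]))
      ≤ ∫ ω, (univ.sup' ⟨⟨0, hq⟩, mem_univ _⟩ fun i => f (xp i) ω) ∂μ := by
  set best := fun ω => univ.sup' ⟨⟨0, hq⟩, mem_univ _⟩ fun i => f (xp i) ω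
  have hbest : Integrable best μ := Integrable.finset_sup' _ fun i _ => hint (xp i)
  refine ⟨?_, ?_⟩
  · gcongr with i
    exact Finset.sup'_le _ _ fun y _ => hxp i y
  · calc ∑ i, μ.real (r ⁻¹' {i}) * ∫ ω, f (xp i) ω ∂μ[|r ⁻¹' {i}]
        = ∑ i, ∫ ω in r ⁻¹' {i}, f (xp i) ω ∂μ := by
          simp only [measureReal_mul_integral_cond]
      _ ≤ ∑ i, ∫ ω in r ⁻¹' {i}, best ω ∂μ :=
          sum_le_sum fun i _ => setIntegral_mono (hint (xp i)).integrableOn hbest.integrableOn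
            fun ω => Finset.le_sup' (fun j => f (xp j) ω) (mem_univ i)
      _ = ∫ ω, best ω ∂μ := sum_setIntegral_fiber hr hbest

/-- Let `x⁺(X,i)` maximize the conditional posterior mean `E[f(·) | r(X) = i]` and
`X⁺ = (x⁺(X,1),…,x⁺(X,q))`.  Then
`V(X) = E[max_y E[f(y)|r(X)]] ≤ E[f(x⁺(X, r(X)))] ≤ E[max_i f(x⁺(X,i))] = qEUBO(X⁺)`,
where the first two quantities are written as sums over the values of `r(X)`. -/
theorem stmt5
    {Ω : Type*} [MeasurableSpace Ω] (μ : Measure Ω) [IsProbabilityMeasure μ]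
    {X : Type*} [Fintype X] [Nonempty X]
    (q : ℕ) (hq : 1 ≤ q)
    (f : X → Ω → ℝ) (hmeas : ∀ y, Measurable (f y)) (hint : ∀ y, Integrable (f y) μ)
    (x : Fin q → X) (r : Ω → Fin q) (hr : Measurable r)
    (xp : Fin q → X)
    (hxp : ∀ i (y : X),
      ∫ ω, f y ω ∂(μ[|r ⁻¹' {i}]) ≤ ∫ ω, f (xp i) ω ∂(μ[|r ⁻¹' {i}])) :
    (∑ i, (μ (r ⁻¹' {i})).toReal
        * (univ.sup' univ_nonempty fun y => ∫ ω, f y ω ∂(μ[|r ⁻¹' {i}])))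
      ≤ ∑ i, (μ (r ⁻¹' {i})).toReal * ∫ ω, f (xp i) ω ∂(μ[|r ⁻¹' {i}])
    ∧ (∑ i, (μ (r ⁻¹' {i})).toReal * ∫ ω, f (xp i) ω ∂(μ[|r ⁻¹' {i}]))
      ≤ ∫ ω, (univ.sup' ⟨⟨0, hq⟩, mem_univ _⟩ fun i => f (xp i) ω) ∂μ :=
  stmt5_general μ q hq f hint r hr xp hxp
end

section
/- Under the logistic likelihood with noise parameter λ, if X* maximizes qEUBO(X) = E[max_i f(x_i)] over X^q, then V^λ(X*) ≥ max_X V^0(X) − λ W((q−1)/e), where V^λ is the one-step value under noise level λ and V^0 is the noise-free one-step value. -/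
/-!
Write `U(Q, r) = E[f(Q_{r})]` for the expected utility of the item that a response `r` selects
from the query `Q`. Three comparisons give the bound:

* `V^0(Q) ≤ qEUBO(Q')`, where `Q'` lists, for each possible response `i`, the item maximising
  `E[f | r0 = i]`: then `V^0(Q) = U(Q', r0) ≤ qEUBO(Q')`, and `qEUBO(Q') ≤ qEUBO(X*)`.
* `U(X*, rλ) ≤ V^λ(X*)`, since the selected item is one of the candidates of the maximum.
* `qEUBO(X*) - U(X*, rλ) ≤ λ C`: by the logistic likelihood this gap is the expected regret
  `E[∑ᵢ (max f - fᵢ) pᵢ]` of the softmax weights `pᵢ`. Pointwise, with `xᵢ = (max f - fᵢ)/λ`,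
  the bound `(x - C) e^{-x} ≤ e^{-(C+1)}` summed over the `q - 1` non-maximal items contributes
  `(q - 1) e^{-(C+1)}`, which equals `C` exactly when `C e^C = (q - 1)/e`, i.e. `C = W((q-1)/e)`.
-/

open MeasureTheory Finset Real

lemma sub_mul_exp_neg_le (x C : ℝ) : (x - C) * exp (-x) ≤ exp (-(C + 1)) :=
  calc (x - C) * exp (-x) ≤ exp (x - C - 1) * exp (-x) := by
        gcongr; linarith [add_one_le_exp (x - C - 1)]
    _ = exp (-(C + 1)) := by rw [← exp_add]; ring_nf

lemma sum_mul_exp_neg_le {ι : Type*} [Fintype ι] {x : ι → ℝ} {i₀ : ι} (hx : x i₀ = 0) {C : ℝ}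
    (hC : C * exp C = (Fintype.card ι - 1) / exp 1) :
    ∑ i, x i * exp (-x i) ≤ C * ∑ i, exp (-x i) := by
  classical
  have hcard : (#(univ.erase i₀) : ℝ) * exp (-(C + 1)) = C := by
    have hq : (Fintype.card ι : ℝ) - 1 = C * exp C * exp 1 := by rw [hC]; field_simp
    rw [card_erase_of_mem (mem_univ _), card_univ, Nat.cast_pred (Fintype.card_pos_iff.mpr ⟨i₀⟩),
      hq, exp_neg, exp_add]
    field_simp
  have hrest : ∑ i ∈ univ.erase i₀, (x i - C) * exp (-x i) ≤ C :=
    calc ∑ i ∈ univ.erase i₀, (x i - C) * exp (-x i) ≤ #(univ.erase i₀) • exp (-(C + 1)) :=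
          sum_le_card_nsmul _ _ _ fun i _ => sub_mul_exp_neg_le (x i) C
      _ = C := by rw [nsmul_eq_mul, hcard]
  rw [mul_sum, ← sub_nonpos, ← sum_sub_distrib, ← add_sum_erase _ _ (mem_univ i₀)]
  simp only [← sub_mul] at hrest ⊢
  rw [hx]
  simp only [neg_zero, exp_zero]
  linarith

lemma sum_sub_mul_softmax_le {ι : Type*} [Fintype ι] [Nonempty ι] (g : ι → ℝ) {lam : ℝ}
    (hlam : 0 < lam) {C : ℝ} (hC : C * exp C = (Fintype.card ι - 1) / exp 1) :
    ∑ i, (univ.sup' univ_nonempty g - g i) * (exp (g i / lam) / ∑ j, exp (g j / lam))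
      ≤ lam * C := by
  set m := univ.sup' univ_nonempty g
  obtain ⟨i₀, -, hi₀⟩ := exists_mem_eq_sup' univ_nonempty g
  set x : ι → ℝ := fun i => (m - g i) / lam
  have hexp : ∀ i, exp (g i / lam) = exp (m / lam) * exp (-x i) := fun i => by
    rw [← exp_add]; congr 1; simp only [x]; field_simp; ring
  have hsub : ∀ i, m - g i = lam * x i := fun i => by simp only [x]; field_simp
  have hsum : ∑ j, exp (g j / lam) = exp (m / lam) * ∑ j, exp (-x j) := by
    rw [mul_sum]; exact sum_congr rfl fun j _ => hexp j
  have hZ : 0 < ∑ i, exp (-x i) := sum_pos (fun i _ => exp_pos _) univ_nonempty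
  have key := sum_mul_exp_neg_le (x := x) (i₀ := i₀) (by simp [x, ← hi₀, m]) hC
  rw [hsum]
  simp_rw [hexp, hsub]
  calc ∑ i, lam * x i * (exp (m / lam) * exp (-x i) / (exp (m / lam) * ∑ j, exp (-x j)))
      = ∑ i, lam * (x i * exp (-x i)) / ∑ j, exp (-x j) :=
        sum_congr rfl fun i _ => by rw [mul_div_mul_left _ _ (exp_pos _).ne']; ring
    _ = lam * (∑ i, x i * exp (-x i)) / ∑ j, exp (-x j) := by rw [← sum_div, ← mul_sum]
    _ ≤ lam * C := by
        rw [div_le_iff₀ hZ, mul_assoc]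
        exact mul_le_mul_of_nonneg_left key hlam.le

lemma sum_indicator_preimage_singleton {Ω ι : Type*} [Fintype ι] (r : Ω → ι)
    (G : ι → Ω → ℝ) (ω : Ω) : ∑ i, (r ⁻¹' {i}).indicator (G i) ω = G (r ω) ω := by
  classical
  simp [Set.indicator_apply, eq_comm]

section Fiberwise

variable {Ω ι : Type*} [MeasurableSpace Ω] {μ : Measure Ω}
  [Fintype ι] [MeasurableSpace ι] [MeasurableSingletonClass ι] {r : Ω → ι} {G : ι → Ω → ℝ}

lemma integrable_select (hr : Measurable r) (hG : ∀ i, Integrable (G i) μ) :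
    Integrable (fun ω => G (r ω) ω) μ := by
  simp_rw [← sum_indicator_preimage_singleton r G]
  exact integrable_finsetSum _ fun i _ => (hG i).indicator (hr (measurableSet_singleton i))

lemma integral_select_eq_sum (hr : Measurable r) (hG : ∀ i, Integrable (G i) μ) :
    ∫ ω, G (r ω) ω ∂μ = ∑ i, ∫ ω in r ⁻¹' {i}, G i ω ∂μ := by
  simp_rw [← sum_indicator_preimage_singleton r G]
  rw [integral_finsetSum _ fun i _ => (hG i).indicator (hr (measurableSet_singleton i))]
  exact sum_congr rfl fun i _ => integral_indicator (hr (measurableSet_singleton i))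

end Fiberwise

lemma integral_condExp_select {Ω ι : Type*} [Fintype ι] [MeasurableSpace ι]
    [MeasurableSingletonClass ι] {m mΩ : MeasurableSpace Ω} {μ : Measure[mΩ] Ω}
    [IsFiniteMeasure μ] (hm : m ≤ mΩ) {r : Ω → ι} (hr : Measurable[m] r)
    {G : ι → Ω → ℝ} (hG : ∀ i, Integrable (G i) μ) :
    ∫ ω, μ[G (r ω) | m] ω ∂μ = ∫ ω, G (r ω) ω ∂μ := by
  have hr₀ : Measurable[mΩ] r := hr.mono hm le_rfl
  rw [integral_select_eq_sum (G := fun i => μ[G i | m]) hr₀ fun i => integrable_condExp,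
    integral_select_eq_sum hr₀ hG]
  exact sum_congr rfl fun i _ => setIntegral_condExp hm (hG i) (hr (measurableSet_singleton i))

lemma integrable_finset_sup' {Ω X : Type*} [MeasurableSpace Ω] {μ : Measure Ω} {s : Finset X}
    (hs : s.Nonempty) {g : X → Ω → ℝ} (hg : ∀ y ∈ s, Integrable (g y) μ) :
    Integrable (fun ω => s.sup' hs fun y => g y ω) μ := by
  have hsup : (fun ω => s.sup' hs fun y => g y ω) = s.sup' hs g :=
    funext fun ω => (Finset.sup'_apply hs g ω).symm
  rw [hsup]
  exact sup'_induction hs g (p := (Integrable · μ)) (fun _ h _ h' => h.sup h') hg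

lemma exists_sup'_eq_select {Ω ι X : Type*} [MeasurableSpace ι] [Fintype X] [Nonempty X]
    {r : Ω → ι} {g : X → Ω → ℝ} (hg : ∀ y, StronglyMeasurable[.comap r inferInstance] (g y)) :
    ∃ Q : ι → X, ∀ ω, (univ.sup' univ_nonempty fun y => g y ω) = g (Q (r ω)) ω := by
  choose h _ hh using fun y => (hg y).exists_eq_measurable_comp
  choose Q _ hQ using fun i => exists_max_image univ (fun y => h y i) univ_nonempty
  refine ⟨Q, fun ω =>
    le_antisymm (sup'_le _ _ fun y _ => ?_) (le_sup' (fun y => g y ω) (mem_univ _))⟩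
  rw [hh, hh]
  exact hQ (r ω) y (mem_univ y)

lemma condExp_indicator_ae_eq_mul {Ω : Type*} {m mΩ : MeasurableSpace Ω} {μ : Measure[mΩ] Ω}
    [IsFiniteMeasure μ] {g : Ω → ℝ} (hg : StronglyMeasurable[m] g) (hgi : Integrable g μ)
    {s : Set Ω} (hs : MeasurableSet[mΩ] s) :
    μ[s.indicator g | m] =ᵐ[μ] g * μ[s.indicator 1 | m] := by
  have hmul : g * s.indicator 1 = s.indicator g := by
    ext ω; by_cases h : ω ∈ s <;> simp [h]
  rw [← hmul]
  refine condExp_mul_of_stronglyMeasurable_left hg ?_ ((integrable_const 1).indicator hs)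
  rw [hmul]; exact hgi.indicator hs

section OneStepValue

variable {Ω ι X : Type*} [MeasurableSpace Ω] {μ : Measure Ω} [Fintype ι] [MeasurableSpace ι]
  [MeasurableSingletonClass ι] [Fintype X] [Nonempty X] {f : X → Ω → ℝ} {r : Ω → ι}

lemma exists_integral_sup'_condExp_le [IsFiniteMeasure μ] [Nonempty ι]
    (hf : ∀ y, Integrable (f y) μ) (hr : Measurable r) :
    ∃ Q : ι → X, ∫ ω, (univ.sup' univ_nonempty fun y => μ[f y | .comap r inferInstance] ω) ∂μ
      ≤ ∫ ω, (univ.sup' univ_nonempty fun i => f (Q i) ω) ∂μ := by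
  obtain ⟨Q, hQ⟩ := exists_sup'_eq_select (r := r) fun y =>
    stronglyMeasurable_condExp (μ := μ) (f := f y)
  refine ⟨Q, ?_⟩
  calc _ = ∫ ω, μ[f (Q (r ω)) | .comap r inferInstance] ω ∂μ :=
        integral_congr_ae (.of_forall hQ)
    _ = ∫ ω, f (Q (r ω)) ω ∂μ :=
        integral_condExp_select hr.comap_le (comap_measurable r) fun i => hf (Q i)
    _ ≤ _ := integral_mono (integrable_select (G := fun i => f (Q i)) hr fun i => hf (Q i))
        (integrable_finset_sup' _ fun i _ => hf (Q i))
        fun ω => le_sup' (fun i => f (Q i) ω) (mem_univ (r ω))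

lemma integral_select_le_integral_sup'_condExp [IsFiniteMeasure μ]
    (hf : ∀ y, Integrable (f y) μ) (hr : Measurable r) (Q : ι → X) :
    ∫ ω, f (Q (r ω)) ω ∂μ
      ≤ ∫ ω, (univ.sup' univ_nonempty fun y => μ[f y | .comap r inferInstance] ω) ∂μ := by
  rw [← integral_condExp_select hr.comap_le (comap_measurable r) fun i => hf (Q i)]
  exact integral_mono (integrable_select (G := fun i => μ[f (Q i) | _]) hr
      fun i => integrable_condExp)
    (integrable_finset_sup' _ fun y _ => integrable_condExp)
    fun ω => le_sup' (fun y => μ[f y | .comap r inferInstance] ω) (mem_univ _)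

end OneStepValue

lemma integral_sup'_sub_le_integral_select {Ω ι : Type*} {m mΩ : MeasurableSpace Ω}
    {μ : Measure[mΩ] Ω} [IsProbabilityMeasure μ] [Fintype ι] [Nonempty ι] [DecidableEq ι]
    [MeasurableSpace ι] [MeasurableSingletonClass ι] (hm : m ≤ mΩ) {f : ι → Ω → ℝ}
    (hfm : ∀ i, Measurable[m] (f i)) (hfi : ∀ i, Integrable (f i) μ) {lam C : ℝ}
    (hlam : 0 < lam) (hC : C * exp C = (Fintype.card ι - 1) / exp 1) {r : Ω → ι}
    (hr : Measurable r)
    (hlik : ∀ i, μ[(fun ω => if r ω = i then (1 : ℝ) else 0) | m]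
      =ᵐ[μ] fun ω => exp (f i ω / lam) / ∑ j, exp (f j ω / lam)) :
    ∫ ω, (univ.sup' univ_nonempty fun i => f i ω) ∂μ - lam * C ≤ ∫ ω, f (r ω) ω ∂μ := by
  set M := fun ω => univ.sup' univ_nonempty fun i => f i ω
  set p := fun i ω => exp (f i ω / lam) / ∑ j, exp (f j ω / lam)
  have hMi : Integrable M μ := integrable_finset_sup' _ fun i _ => hfi i
  have hMm : Measurable[m] M := by
    rw [show M = univ.sup' univ_nonempty f from funext fun ω => (Finset.sup'_apply _ f ω).symm]
    exact sup'_induction univ_nonempty f (p := Measurable[m]) (fun _ h _ h' => h.sup h')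
      fun i _ => hfm i
  have hgi : ∀ i, Integrable (fun ω => M ω - f i ω) μ := fun i => hMi.sub (hfi i)
  have hpull : ∀ i, μ[(r ⁻¹' {i}).indicator (fun ω => M ω - f i ω) | m]
      =ᵐ[μ] fun ω => (M ω - f i ω) * p i ω := by
    intro i
    have hχ : (fun ω => if r ω = i then (1 : ℝ) else 0) = (r ⁻¹' {i}).indicator 1 := by
      funext ω; by_cases h : r ω = i <;> simp [h]
    have hlik_i := hlik i
    rw [hχ] at hlik_i
    filter_upwards [condExp_indicator_ae_eq_mul (hMm.sub (hfm i)).stronglyMeasurable (hgi i)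
      (hr (measurableSet_singleton i)), hlik_i] with ω h1 h2
    rw [Pi.mul_apply, h2] at h1
    exact h1
  have hint : ∀ i, Integrable (fun ω => (M ω - f i ω) * p i ω) μ :=
    fun i => integrable_condExp.congr (hpull i)
  suffices ∫ ω, (M ω - f (r ω) ω) ∂μ ≤ lam * C by
    rw [integral_sub hMi (integrable_select hr hfi)] at this
    linarith
  calc ∫ ω, (M ω - f (r ω) ω) ∂μ
      = ∑ i, ∫ ω in r ⁻¹' {i}, (M ω - f i ω) ∂μ :=
        integral_select_eq_sum (G := fun i ω => M ω - f i ω) hr hgi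
    _ = ∑ i, ∫ ω, (M ω - f i ω) * p i ω ∂μ := sum_congr rfl fun i _ => by
        rw [← integral_indicator (hr (measurableSet_singleton i)), ← integral_condExp hm]
        exact integral_congr_ae (hpull i)
    _ = ∫ ω, ∑ i, (M ω - f i ω) * p i ω ∂μ := (integral_finsetSum _ fun i _ => hint i).symm
    _ ≤ ∫ _, lam * C ∂μ := integral_mono (integrable_finsetSum _ fun i _ => hint i)
        (integrable_const _) fun ω => sum_sub_mul_softmax_le (fun i => f i ω) hlam hC
    _ = lam * C := by simp

theorem stmt8_general
    {Ω : Type*} [MeasurableSpace Ω] (μ : Measure Ω) [IsProbabilityMeasure μ]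
    {X : Type*} [Fintype X] [Nonempty X]
    (q : ℕ) (hq : 1 ≤ q)
    (f : X → Ω → ℝ) (hmeas : ∀ y, Measurable (f y)) (hint : ∀ y, Integrable (f y) μ)
    (lam : ℝ) (hlam : 0 < lam)
    (C : ℝ) (hC : C * exp C = ((q : ℝ) - 1) / exp 1)
    (rl r0 : (Fin q → X) → Ω → Fin q)
    (hrl : ∀ Q, Measurable (rl Q)) (hr0 : ∀ Q, Measurable (r0 Q))
    -- `rl` follows the logistic likelihood with parameter `λ`:
    (hlik : ∀ (Q : Fin q → X) (i : Fin q),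
      (μ[(fun ω => if rl Q ω = i then (1 : ℝ) else 0) |
          MeasurableSpace.comap (fun ω (i : Fin q) => f (Q i) ω) inferInstance])
        =ᵐ[μ] fun ω => exp (f (Q i) ω / lam) / ∑ j, exp (f (Q j) ω / lam))
    (Xstar : Fin q → X)
    -- `X*` maximizes qEUBO:
    (hXstar : ∀ Q : Fin q → X,
      ∫ ω, (univ.sup' ⟨⟨0, hq⟩, mem_univ _⟩ fun i => f (Q i) ω) ∂μ
        ≤ ∫ ω, (univ.sup' ⟨⟨0, hq⟩, mem_univ _⟩ fun i => f (Xstar i) ω) ∂μ) :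
    ∀ Q : Fin q → X,
      (∫ ω, (univ.sup' univ_nonempty
          fun y => (μ[f y | MeasurableSpace.comap (r0 Q) inferInstance]) ω) ∂μ) - lam * C
        ≤ ∫ ω, (univ.sup' univ_nonempty
            fun y => (μ[f y | MeasurableSpace.comap (rl Xstar) inferInstance]) ω) ∂μ := by
  intro Q
  have : Nonempty (Fin q) := ⟨⟨0, hq⟩⟩
  obtain ⟨Q', hV₀⟩ := exists_integral_sup'_condExp_le hint (hr0 Q)
  have hUV := integral_select_le_integral_sup'_condExp hint (hrl Xstar) Xstar
  have hregret := integral_sup'_sub_le_integral_select (f := fun i => f (Xstar i))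
    (measurable_pi_lambda _ fun i => hmeas (Xstar i)).comap_le
    (fun i => (measurable_pi_apply i).comp (comap_measurable fun ω (i : Fin q) => f (Xstar i) ω))
    (fun i => hint (Xstar i)) hlam (by rwa [Fintype.card_fin]) (hrl Xstar) (hlik Xstar)
  linarith [hXstar Q']

/-- Under the logistic likelihood with noise parameter `λ`, if `X*` maximizes
`qEUBO(Q) = E[max_i f(Q_i)]` over queries, then
`V^λ(X*) ≥ max_Q V^0(Q) − λ W((q−1)/e)`, where `V^λ` is the one-step value under the
logistic (noisy) response `rλ` and `V^0` is the one-step value under a noise-free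
response `r0`. -/
theorem stmt8
    {Ω : Type*} [MeasurableSpace Ω] (μ : Measure Ω) [IsProbabilityMeasure μ]
    {X : Type*} [Fintype X] [Nonempty X]
    (q : ℕ) (hq : 1 ≤ q)
    (f : X → Ω → ℝ) (hmeas : ∀ y, Measurable (f y)) (hint : ∀ y, Integrable (f y) μ)
    (lam : ℝ) (hlam : 0 < lam)
    (C : ℝ) (hC0 : 0 ≤ C) (hC : C * exp C = ((q : ℝ) - 1) / exp 1)
    (rl r0 : (Fin q → X) → Ω → Fin q)
    (hrl : ∀ Q, Measurable (rl Q)) (hr0 : ∀ Q, Measurable (r0 Q))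
    -- `rl` follows the logistic likelihood with parameter `λ`:
    (hlik : ∀ (Q : Fin q → X) (i : Fin q),
      (μ[(fun ω => if rl Q ω = i then (1 : ℝ) else 0) |
          MeasurableSpace.comap (fun ω (i : Fin q) => f (Q i) ω) inferInstance])
        =ᵐ[μ] fun ω => exp (f (Q i) ω / lam) / ∑ j, exp (f (Q j) ω / lam))
    -- `r0` is noise-free:
    (hnoisefree : ∀ Q : Fin q → X, ∀ᵐ ω ∂μ, ∀ i, f (Q i) ω ≤ f (Q (r0 Q ω)) ω)
    (Xstar : Fin q → X)
    -- `X*` maximizes qEUBO: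
    (hXstar : ∀ Q : Fin q → X,
      ∫ ω, (univ.sup' ⟨⟨0, hq⟩, mem_univ _⟩ fun i => f (Q i) ω) ∂μ
        ≤ ∫ ω, (univ.sup' ⟨⟨0, hq⟩, mem_univ _⟩ fun i => f (Xstar i) ω) ∂μ) :
    ∀ Q : Fin q → X,
      (∫ ω, (univ.sup' univ_nonempty
          fun y => (μ[f y | MeasurableSpace.comap (r0 Q) inferInstance]) ω) ∂μ) - lam * C
        ≤ ∫ ω, (univ.sup' univ_nonempty
            fun y => (μ[f y | MeasurableSpace.comap (rl Xstar) inferInstance]) ω) ∂μ :=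
  stmt8_general μ q hq f hmeas hint lam hlam C hC rl r0 hrl hr0 hlik Xstar hXstar
end
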